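/- arXiv:1810.11280 — 7 statements merged into one kernel-verified Lean document; each statement's English description precedes it below -/
import Mathlib

section
/- Let F be a finite family of finite sets. If an ordering (S_1, ..., S_n) of F satisfies the running intersection property, then a join tree for F exists: a tree whose vertex set is F such that for every pair of vertices X_1, X_2 in the tree, every vertex on the path between X_1 and X_2 contains X_1 ∩ X_2. -/
/-!
Let `p a` be the earlier index that the running intersection property provides for `S a`. The
edges `{a, p a}` form a tree on the indices: every vertex has at most one lower neighbour, so
there is no cycle, and following parents from any index reaches `0`. For an element `x` with
least containing index `m`, the property `S a ∩ S m ⊆ S (p a)` for `m < a` means that parent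
steps from any set containing `x` stay among sets containing `x` until they reach `m`. Hence the
sets containing `x` span a subtree, and the unique path between two of them stays inside it.
-/

/-- `S` is a running intersection ordering: for every index `a ≥ 1` there is an earlier
index `b` such that `S a ∩ (⋃_{c < a} S c) ⊆ S b`. -/
def IsRIO {α : Type*} [DecidableEq α] {n : ℕ} (S : Fin n → Finset α) : Prop :=
  ∀ a : Fin n, 0 < (a : ℕ) → ∃ b : Fin n, (b : ℕ) < (a : ℕ) ∧
    S a ∩ (Finset.univ.filter (fun c : Fin n => (c : ℕ) < (a : ℕ))).biUnion S ⊆ S b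

/-- `T` is a join tree for the family `F`: a tree on vertex set `F` such that every
vertex on a path between `X₁` and `X₂` contains `X₁ ∩ X₂`. -/
def IsJoinTree {α : Type*} [DecidableEq α] (F : Finset (Finset α))
    (T : SimpleGraph {X // X ∈ F}) : Prop :=
  T.IsTree ∧ ∀ (X₁ X₂ : {X // X ∈ F}) (p : T.Walk X₁ X₂), p.IsPath →
    ∀ Z ∈ p.support, (X₁ : Finset α) ∩ (X₂ : Finset α) ⊆ (Z : Finset α)

namespace SimpleGraph

variable {V : Type*}

theorem IsAcyclic.support_subset_of_isPath {G : SimpleGraph V} (hG : G.IsAcyclic) {u v : V}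
    {p : G.Walk u v} (hp : p.IsPath) (w : G.Walk u v) : p.support ⊆ w.support := by
  classical
  obtain rfl : p = w.bypass :=
    congrArg Subtype.val <| (hG.subsingleton_path u v).elim ⟨p, hp⟩ ⟨_, w.bypass_isPath⟩
  exact w.support_bypass_subset_support

theorem IsAcyclic.inter_subset_of_isPath {α : Type*} [DecidableEq α] {G : SimpleGraph V}
    (hG : G.IsAcyclic) {L : V → Finset α}
    (hconn : ∀ ⦃x u v⦄, x ∈ L u → x ∈ L v →
      ∃ w : G.Walk u v, ∀ z ∈ w.support, x ∈ L z)
    {u v z : V} {p : G.Walk u v} (hp : p.IsPath) (hz : z ∈ p.support) : L u ∩ L v ⊆ L z := by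
  intro x hx
  obtain ⟨hxu, hxv⟩ := Finset.mem_inter.1 hx
  obtain ⟨w, hw⟩ := hconn hxu hxv
  exact hw z (hG.support_subset_of_isPath hp w hz)

theorem isAcyclic_of_lower_neighbor_unique [LinearOrder V] {G : SimpleGraph V}
    (h : ∀ ⦃a b c⦄, G.Adj a b → G.Adj a c → b < a → c < a → b = c) : G.IsAcyclic := by
  classical
  -- A largest vertex of a cycle has two distinct neighbours on it, both lower.
  intro v c hc
  obtain ⟨a, ha, hmax⟩ := c.support.toFinset.exists_max_image id ⟨v, by simp⟩
  rw [List.mem_toFinset] at ha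
  set c' := c.rotate a ha
  have hc' : c'.IsCycle := hc.rotate ha
  have hlt : ∀ i, G.Adj a (c'.getVert i) → c'.getVert i < a := fun i hadj =>
    have hmem := (c.mem_support_rotate_iff a ha).1 (c'.getVert_mem_support i)
    (hmax _ (List.mem_toFinset.2 hmem)).lt_of_ne hadj.ne'
  have hsnd := c'.adj_snd hc'.not_nil
  have hpen := (c'.adj_penultimate hc'.not_nil).symm
  exact hc'.snd_ne_penultimate (h hsnd hpen (hlt _ hsnd) (hlt _ hpen))

def parentGraph (p : V → V) : SimpleGraph V :=
  fromRel fun a b => a = p b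

theorem parentGraph_adj_self {p : V → V} {a : V} (h : p a ≠ a) : (parentGraph p).Adj a (p a) :=
  (fromRel_adj _ _ _).2 ⟨h.symm, Or.inr rfl⟩

theorem parentGraph_eq_of_adj_of_lt [Preorder V] {p : V → V} (hp : ∀ a, p a ≤ a) {a b : V}
    (hadj : (parentGraph p).Adj a b) (hba : b < a) : b = p a := by
  rcases ((fromRel_adj _ _ _).1 hadj).2 with rfl | h
  · exact absurd (hp b) hba.not_ge
  · exact h

theorem isAcyclic_parentGraph [LinearOrder V] {p : V → V} (hp : ∀ a, p a ≤ a) :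
    (parentGraph p).IsAcyclic :=
  isAcyclic_of_lower_neighbor_unique fun _ _ _ hab hac hba hca =>
    (parentGraph_eq_of_adj_of_lt hp hab hba).trans (parentGraph_eq_of_adj_of_lt hp hac hca).symm

theorem exists_parentGraph_walk [LinearOrder V] [WellFoundedLT V] {p : V → V} {P : V → Prop}
    {m : V} (hstep : ∀ a, P a → a ≠ m → p a < a ∧ P (p a)) {a : V} (ha : P a) :
    ∃ w : (parentGraph p).Walk a m, ∀ z ∈ w.support, P z := by
  induction a using WellFoundedLT.induction with
  | _ a ih =>
  by_cases ham : a = m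
  · subst ham
    exact ⟨.nil, by simpa using ha⟩
  obtain ⟨hlt, hpa⟩ := hstep a ha ham
  obtain ⟨w, hw⟩ := ih (p a) hlt hpa
  refine ⟨.cons (parentGraph_adj_self hlt.ne) w, ?_⟩
  simpa [ha] using hw

end SimpleGraph

namespace IsRIO

open SimpleGraph

variable {α : Type*} [DecidableEq α] {n : ℕ} {S : Fin n → Finset α}

-- `0` is its own parent.
noncomputable def parent (hS : IsRIO S) (a : Fin n) : Fin n :=
  if ha : 0 < (a : ℕ) then (hS a ha).choose else a

theorem parent_lt (hS : IsRIO S) {a : Fin n} (ha : 0 < (a : ℕ)) : hS.parent a < a := by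
  rw [parent, dif_pos ha]
  exact (hS a ha).choose_spec.1

theorem parent_le (hS : IsRIO S) (a : Fin n) : hS.parent a ≤ a := by
  by_cases ha : 0 < (a : ℕ)
  · exact (hS.parent_lt ha).le
  · rw [parent, dif_neg ha]

theorem mem_parent (hS : IsRIO S) {a c : Fin n} {x : α} (hxa : x ∈ S a) (hxc : x ∈ S c)
    (hca : c < a) : x ∈ S (hS.parent a) := by
  have ha : 0 < (a : ℕ) := (Nat.zero_le _).trans_lt hca
  rw [parent, dif_pos ha]
  exact (hS a ha).choose_spec.2 <| Finset.mem_inter.2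
    ⟨hxa, Finset.mem_biUnion.2 ⟨c, Finset.mem_filter.2 ⟨Finset.mem_univ c, hca⟩, hxc⟩⟩

theorem isTree_parentGraph (hS : IsRIO S) (hn : 0 < n) : (parentGraph hS.parent).IsTree := by
  have hroot : ∀ a : Fin n, (parentGraph hS.parent).Reachable a ⟨0, hn⟩ := fun a =>
    (exists_parentGraph_walk (P := fun _ => True)
      (fun b _ hb => ⟨hS.parent_lt (Nat.pos_of_ne_zero fun h => hb (Fin.ext h)), trivial⟩)
      trivial).elim fun w _ => ⟨w⟩
  have : Nonempty (Fin n) := ⟨⟨0, hn⟩⟩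
  exact ⟨⟨fun a b => (hroot a).trans (hroot b).symm⟩, isAcyclic_parentGraph hS.parent_le⟩

-- Each index whose set contains `x` descends through parents to the least such index.
theorem exists_walk_forall_mem (hS : IsRIO S) ⦃x : α⦄ ⦃u v : Fin n⦄ (hxu : x ∈ S u)
    (hxv : x ∈ S v) :
    ∃ w : (parentGraph hS.parent).Walk u v, ∀ z ∈ w.support, x ∈ S z := by
  obtain ⟨m, hm, hmin⟩ := (Finset.univ.filter fun c => x ∈ S c).exists_min_image id
    ⟨u, Finset.mem_filter.2 ⟨Finset.mem_univ u, hxu⟩⟩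
  have hstep (a : Fin n) (hxa : x ∈ S a) (ham : a ≠ m) :
      hS.parent a < a ∧ x ∈ S (hS.parent a) :=
    have hma : m < a := (hmin a (Finset.mem_filter.2 ⟨Finset.mem_univ a, hxa⟩)).lt_of_ne' ham
    ⟨hS.parent_lt ((Nat.zero_le _).trans_lt hma),
      hS.mem_parent hxa (Finset.mem_filter.1 hm).2 hma⟩
  obtain ⟨wu, hwu⟩ := exists_parentGraph_walk hstep hxu
  obtain ⟨wv, hwv⟩ := exists_parentGraph_walk hstep hxv
  refine ⟨wu.append wv.reverse, fun z hz => ?_⟩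
  rw [Walk.mem_support_append_iff, Walk.support_reverse, List.mem_reverse] at hz
  exact hz.elim (hwu z) (hwv z)

end IsRIO

theorem isJoinTree_map {α V : Type*} [DecidableEq α] {F : Finset (Finset α)}
    (e : V ≃ {X // X ∈ F}) {G : SimpleGraph V} (hG : G.IsTree)
    (hpath : ∀ (u v : V) (p : G.Walk u v), p.IsPath →
      ∀ z ∈ p.support, (e u : Finset α) ∩ (e v : Finset α) ⊆ (e z : Finset α)) :
    IsJoinTree F (G.map e.toEmbedding) := by
  let φ := SimpleGraph.Iso.map e G
  refine ⟨φ.isTree_iff.1 hG, fun X₁ X₂ p hp Z hZ => ?_⟩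
  have := hpath _ _ (p.map φ.symm.toHom) (hp.map φ.symm.injective) (φ.symm Z)
    (by rw [SimpleGraph.Walk.support_map]; exact List.mem_map_of_mem hZ)
  simpa [φ] using this

/-- If an ordering of the finite family `F` of finite sets satisfies the running
intersection property, then a join tree for `F` exists. -/
theorem stmt0 {α : Type*} [DecidableEq α] (F : Finset (Finset α)) {n : ℕ} (hn : 0 < n)
    (S : Fin n → Finset α) (hinj : Function.Injective S)
    (hrange : Finset.image S Finset.univ = F) (hrip : IsRIO S) :
    ∃ T : SimpleGraph {X // X ∈ F}, IsJoinTree F T := by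
  let e : Fin n ≃ {X // X ∈ F} := Equiv.ofBijective
    (fun a => ⟨S a, hrange ▸ Finset.mem_image_of_mem S (Finset.mem_univ a)⟩)
    ⟨fun a b hab => hinj (congrArg Subtype.val hab), fun ⟨X, hX⟩ => by
      obtain ⟨a, -, rfl⟩ := Finset.mem_image.1 (hrange ▸ hX)
      exact ⟨a, rfl⟩⟩
  have htree := hrip.isTree_parentGraph hn
  exact ⟨_, isJoinTree_map e htree fun u v p hp z hz =>
    htree.isAcyclic.inter_subset_of_isPath (L := S) hrip.exists_walk_forall_mem hp hz⟩
end

section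
/- Let F be a finite family of finite sets admitting a join tree T. Then any ordering of F obtained by a preorder traversal of T (visiting each node before its subtrees, starting from any chosen root) is a running intersection ordering of F. -/
namespace SimpleGraph

variable {V : Type*} {G : SimpleGraph V} {n : ℕ} {S : Fin n → V}

theorem exists_walk_to_first_of_forall_adj_earlier
    (htrav : ∀ a : Fin n, 0 < (a : ℕ) → ∃ b : Fin n, (b : ℕ) < (a : ℕ) ∧ G.Adj (S b) (S a))
    (c : Fin n) :
    ∃ w : G.Walk (S c) (S ⟨0, c.pos⟩), ∀ v ∈ w.support, ∃ i ≤ c, S i = v := by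
  induction c using WellFoundedLT.induction with
  | ind c ih =>
    rcases Nat.eq_zero_or_pos c with hc | hc
    · rw [show (⟨0, c.pos⟩ : Fin n) = c from Fin.ext hc.symm]
      exact ⟨.nil, by simpa using ⟨c, le_rfl, rfl⟩⟩
    · obtain ⟨b, hbc, hadj⟩ := htrav c hc
      obtain ⟨w, hw⟩ := ih b hbc
      refine ⟨.cons hadj.symm w, fun v hv => ?_⟩
      rcases List.mem_cons.1 (Walk.support_cons _ _ ▸ hv) with rfl | hv
      · exact ⟨c, le_rfl, rfl⟩
      · obtain ⟨i, hib, rfl⟩ := hw v hv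
        exact ⟨i, hib.trans hbc.le, rfl⟩

theorem exists_path_through_adj_earlier (hS : Function.Injective S)
    (htrav : ∀ a : Fin n, 0 < (a : ℕ) → ∃ b : Fin n, (b : ℕ) < (a : ℕ) ∧ G.Adj (S b) (S a))
    {a b c : Fin n} (hb : b < a) (hc : c < a) (hadj : G.Adj (S b) (S a)) :
    ∃ p : G.Walk (S c) (S a), p.IsPath ∧ S b ∈ p.support := by
  classical
  obtain ⟨wc, hwc⟩ := exists_walk_to_first_of_forall_adj_earlier htrav c
  obtain ⟨wb, hwb⟩ := exists_walk_to_first_of_forall_adj_earlier htrav b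
  let w : G.Walk (S c) (S b) := wc.append wb.reverse
  have hw : ∀ v ∈ w.support, ∃ i < a, S i = v := by
    intro v hv
    rcases (Walk.mem_support_append_iff _ _).1 hv with hv | hv
    · obtain ⟨i, hi, rfl⟩ := hwc v hv
      exact ⟨i, hi.trans_lt hc, rfl⟩
    · obtain ⟨i, hi, rfl⟩ := hwb v (by simpa using hv)
      exact ⟨i, hi.trans_lt hb, rfl⟩
  have ha : S a ∉ w.bypass.support := fun h => by
    obtain ⟨i, hi, hia⟩ := hw _ (w.support_bypass_subset_support h)
    exact hi.ne (hS hia)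
  refine ⟨w.bypass.concat hadj, w.bypass_isPath.concat ha hadj, ?_⟩
  simp [Walk.support_concat]

end SimpleGraph

/-- Any ordering of `F` obtained by a traversal of a join tree `T` that visits each
node before its subtrees (each node after the first is adjacent in `T` to an earlier
node, as holds for any preorder traversal from any root) is a running intersection
ordering of `F`. -/
theorem stmt1 {α : Type*} [DecidableEq α] (F : Finset (Finset α))
    (T : SimpleGraph {X // X ∈ F}) (hT : IsJoinTree F T) {n : ℕ}
    (S : Fin n → {X // X ∈ F}) (hbij : Function.Bijective S)
    (htrav : ∀ a : Fin n, 0 < (a : ℕ) → ∃ b : Fin n, (b : ℕ) < (a : ℕ) ∧ T.Adj (S b) (S a)) :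
    IsRIO (fun a => (S a : Finset α)) := by
  intro a ha
  obtain ⟨b, hb, hadj⟩ := htrav a ha
  refine ⟨b, hb, fun x hx => ?_⟩
  simp only [Finset.mem_inter, Finset.mem_biUnion, Finset.mem_filter, Finset.mem_univ,
    true_and] at hx
  obtain ⟨hxa, c, hc, hxc⟩ := hx
  obtain ⟨p, hp, hbp⟩ :=
    SimpleGraph.exists_path_through_adj_earlier hbij.1 htrav (G := T) hb hc hadj
  exact hT.2 (S c) (S a) p hp (S b) hbp (Finset.mem_inter.2 ⟨hxc, hxa⟩)
end

section
/- Let F be a finite family of finite sets that satisfies the running intersection property (i.e., some running intersection ordering of F exists). Then for every set S ∈ F there exists a running intersection ordering of F whose first element is S. -/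
open Finset

theorem Function.Injective.of_image_univ_eq {ι κ : Type*} [Fintype ι] [DecidableEq κ]
    {f g : ι → κ} (hf : Function.Injective f) (h : univ.image g = univ.image f) :
    Function.Injective g := by
  have hcard : #(univ.image g) = #(univ : Finset ι) := by
    rw [h, card_image_of_injective _ hf]
  simpa using card_image_iff.mp hcard

theorem Fin.image_univ_cons {β : Type*} [DecidableEq β] {m : ℕ} (x : β) (f : Fin m → β) :
    univ.image (Fin.cons x f : Fin (m + 1) → β) = insert x (univ.image f) := by
  ext y
  simp [Fin.exists_fin_succ, eq_comm]

theorem Fin.image_univ_snoc {β : Type*} [DecidableEq β] {m : ℕ} (f : Fin m → β) (x : β) :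
    univ.image (Fin.snoc f x : Fin (m + 1) → β) = insert x (univ.image f) := by
  ext y
  simp [Fin.exists_fin_succ', eq_comm, or_comm]

theorem biUnion_univ_eq_of_image_univ_eq {ι α : Type*} [Fintype ι] [DecidableEq α]
    {S S' : ι → Finset α} (h : univ.image S = univ.image S') :
    univ.biUnion S = univ.biUnion S' := by
  have key : ∀ f : ι → Finset α, univ.biUnion f = (univ.image f).biUnion id := by
    intro f; rw [image_biUnion]; rfl
  rw [key S, key S', h]

section RunningIntersection

variable {α : Type*} [DecidableEq α]

def predUnion {n : ℕ} (S : Fin n → Finset α) (k : ℕ) : Finset α :=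
  (univ.filter fun c : Fin n => (c : ℕ) < k).biUnion S

theorem isRIO_iff {n : ℕ} {S : Fin n → Finset α} :
    IsRIO S ↔ ∀ a : Fin n, 0 < (a : ℕ) →
      ∃ b : Fin n, (b : ℕ) < a ∧ S a ∩ predUnion S a ⊆ S b :=
  Iff.rfl

theorem mem_predUnion {n : ℕ} {S : Fin n → Finset α} {k : ℕ} {x : α} :
    x ∈ predUnion S k ↔ ∃ c : Fin n, (c : ℕ) < k ∧ x ∈ S c := by
  simp [predUnion]

theorem predUnion_of_le {n : ℕ} (S : Fin n → Finset α) {k : ℕ} (hk : n ≤ k) :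
    predUnion S k = univ.biUnion S := by
  ext x
  simp only [mem_predUnion, mem_biUnion, mem_univ, true_and]
  exact exists_congr fun c => and_iff_right (by omega)

theorem predUnion_init {m : ℕ} (S : Fin (m + 1) → Finset α) {k : ℕ} (hk : k ≤ m) :
    predUnion (Fin.init S) k = predUnion S k := by
  ext x
  simp only [mem_predUnion, Fin.exists_fin_succ', Fin.init, Fin.val_castSucc, Fin.val_last]
  exact (or_iff_left fun h => by omega).symm

theorem predUnion_cons_succ {m : ℕ} (x : Finset α) (S : Fin m → Finset α) (k : ℕ) :
    predUnion (Fin.cons x S : Fin (m + 1) → Finset α) (k + 1) = x ∪ predUnion S k := by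
  ext y
  simp [mem_predUnion, Fin.exists_fin_succ]

theorem IsRIO.init {m : ℕ} {S : Fin (m + 1) → Finset α} (hS : IsRIO S) :
    IsRIO (Fin.init S) := by
  rw [isRIO_iff] at *
  intro a ha
  obtain ⟨b, hba, hsub⟩ := hS a.castSucc ha
  refine ⟨⟨b, by omega⟩, hba, ?_⟩
  rw [predUnion_init S a.isLt.le]
  exact hsub

theorem IsRIO.snoc {m : ℕ} {S : Fin m → Finset α} (hS : IsRIO S) {x : Finset α} {b : Fin m}
    (hx : x ∩ univ.biUnion S ⊆ S b) : IsRIO (Fin.snoc S x : Fin (m + 1) → Finset α) := by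
  rw [isRIO_iff] at *
  intro a ha
  induction a using Fin.lastCases with
  | last =>
    refine ⟨b.castSucc, b.isLt, ?_⟩
    simp only [Fin.val_last, Fin.snoc_last, Fin.snoc_castSucc]
    rw [← predUnion_init _ le_rfl, Fin.init_snoc, predUnion_of_le _ le_rfl]
    exact hx
  | cast a =>
    obtain ⟨c, hca, hsub⟩ := hS a ha
    refine ⟨c.castSucc, hca, ?_⟩
    simp only [Fin.val_castSucc, Fin.snoc_castSucc]
    rw [← predUnion_init _ a.isLt.le, Fin.init_snoc]
    exact hsub

/-- `x ∩ S a ⊆ S 0` already lies in the union of the sets before `S a`, so putting `x` in front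
enlarges none of the intersections that matter. -/
theorem IsRIO.cons {m : ℕ} {S : Fin (m + 1) → Finset α} (hS : IsRIO S) {x : Finset α}
    (hx : x ∩ univ.biUnion S ⊆ S 0) : IsRIO (Fin.cons x S : Fin (m + 2) → Finset α) := by
  rw [isRIO_iff] at *
  intro a ha
  induction a using Fin.cases with
  | zero => exact absurd ha (lt_irrefl 0)
  | succ a =>
    simp only [Fin.val_succ, predUnion_cons_succ, Fin.cons_succ]
    rcases Nat.eq_zero_or_pos (a : ℕ) with ha0 | ha0
    · refine ⟨0, Nat.succ_pos _, ?_⟩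
      intro y hy
      simp_all [mem_predUnion]
    · obtain ⟨b, hba, hsub⟩ := hS a ha0
      refine ⟨b.succ, by simpa using hba, ?_⟩
      intro y hy
      rw [mem_inter, mem_union] at hy
      obtain ⟨hya, hy | hy⟩ := hy
      · have hy0 : y ∈ S 0 := hx (mem_inter.mpr ⟨hy, mem_biUnion.mpr ⟨a, mem_univ _, hya⟩⟩)
        exact hsub (mem_inter.mpr ⟨hya, mem_predUnion.mpr ⟨0, ha0, hy0⟩⟩)
      · exact hsub (mem_inter.mpr ⟨hya, hy⟩)

theorem IsRIO.exists_last_inter_subset {m : ℕ} {S : Fin (m + 2) → Finset α} (hS : IsRIO S) :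
    ∃ b, S (Fin.last _) ∩ univ.biUnion (Fin.init S) ⊆ Fin.init S b := by
  obtain ⟨b, hb, hsub⟩ := isRIO_iff.mp hS (Fin.last _) (Nat.succ_pos _)
  refine ⟨⟨b, hb⟩, ?_⟩
  rwa [← predUnion_of_le _ le_rfl, predUnion_init _ le_rfl]

theorem IsRIO.exists_head_eq {n : ℕ} {S : Fin (n + 1) → Finset α} (hS : IsRIO S)
    {T : Finset α} (hT : T ∈ univ.image S) :
    ∃ S' : Fin (n + 1) → Finset α, univ.image S' = univ.image S ∧ IsRIO S' ∧ S' 0 = T := by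
  induction n generalizing T with
  | zero =>
    obtain ⟨i, -, rfl⟩ := mem_image.mp hT
    exact ⟨S, rfl, hS, congrArg S (Fin.fin_one_eq_zero i).symm⟩
  | succ m ih =>
    obtain ⟨b, hb⟩ := hS.exists_last_inter_subset
    have himage : univ.image S = insert (S (Fin.last _)) (univ.image (Fin.init S)) := by
      conv_lhs => rw [← Fin.snoc_init_self S]
      exact Fin.image_univ_snoc _ _
    by_cases hTinit : T ∈ univ.image (Fin.init S)
    · obtain ⟨R, hRimage, hR, hR0⟩ := ih hS.init hTinit
      obtain ⟨c, -, hc⟩ := mem_image.mp (hRimage ▸ mem_image_of_mem (Fin.init S) (mem_univ b))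
      have hlast : S (Fin.last _) ∩ univ.biUnion R ⊆ R c := by
        rwa [biUnion_univ_eq_of_image_univ_eq hRimage, hc]
      refine ⟨Fin.snoc R (S (Fin.last _)), ?_, hR.snoc hlast, ?_⟩
      · rw [Fin.image_univ_snoc, hRimage, himage]
      · rw [← Fin.castSucc_zero, Fin.snoc_castSucc, hR0]
    · obtain ⟨R, hRimage, hR, hR0⟩ := ih hS.init (mem_image_of_mem (Fin.init S) (mem_univ b))
      have hTlast : T = S (Fin.last _) := by
        simpa [himage, hTinit] using hT
      refine ⟨Fin.cons T R, ?_, hR.cons ?_, Fin.cons_zero _ _⟩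
      · rw [Fin.image_univ_cons, hRimage, himage, hTlast]
      · rw [hR0, biUnion_univ_eq_of_image_univ_eq hRimage, hTlast]
        exact hb

end RunningIntersection

/-- If the finite family `F` of finite sets has a running intersection ordering, then
for every `T₀ ∈ F` there is a running intersection ordering of `F` starting with `T₀`. -/
theorem stmt2 {α : Type*} [DecidableEq α] (F : Finset (Finset α)) {n : ℕ} (hn : 0 < n)
    (S : Fin n → Finset α) (hinj : Function.Injective S)
    (hrange : Finset.image S Finset.univ = F) (hrip : IsRIO S)
    (T₀ : Finset α) (hT₀ : T₀ ∈ F) :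
    ∃ S' : Fin n → Finset α, Function.Injective S' ∧
      Finset.image S' Finset.univ = F ∧ IsRIO S' ∧ S' ⟨0, hn⟩ = T₀ := by
  obtain ⟨m, rfl⟩ : ∃ m, n = m + 1 := ⟨n - 1, by omega⟩
  subst hrange
  obtain ⟨S', himage, hS', h0⟩ := hrip.exists_head_eq hT₀
  exact ⟨S', hinj.of_image_univ_eq himage, himage, hS', h0⟩
end

section
/- Let G⃗ be a rooted extraction order (a rooted directed acyclic graph in which every node is reachable from the root) with the confluence edge label assignment. Then for every node i and every pair of in-edges e, e' of i, the label sets of e and e' are equal. -/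
/-- A directed path in the digraph `A` from `i` to `j`, given as its list of vertices. -/
def DiPath {V : Type*} (A : V → V → Prop) (i j : V) (l : List V) : Prop :=
  List.Chain' A l ∧ l.head? = some i ∧ l.getLast? = some j ∧ l.Nodup ∧ 2 ≤ l.length

/-- A confluence from `i` to `j`: a pair of distinct directed paths from `i` to `j`
that are node-disjoint except for their shared start and end nodes. -/
def IsConfluence {V : Type*} (A : V → V → Prop) (i j : V) (l₁ l₂ : List V) : Prop :=
  DiPath A i j l₁ ∧ DiPath A i j l₂ ∧ l₁ ≠ l₂ ∧
  ∀ v ∈ l₁, v ∈ l₂ → v = i ∨ v = j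

/-- The confluence edge label assignment: the edge `e` is labeled with `j` iff `e`
lies on some confluence ending in `j`. -/
def ConfLabel {V : Type*} (A : V → V → Prop) (e : V × V) (j : V) : Prop :=
  ∃ i l₁ l₂, IsConfluence A i j l₁ l₂ ∧ (e ∈ l₁.zip l₁.tail ∨ e ∈ l₂.zip l₂.tail)

/-- The confluence label set of an edge. -/
def ConfSet {V : Type*} (A : V → V → Prop) (e : V × V) : Set V :=
  {j | ConfLabel A e j}

/-- The digraph `A` is acyclic. -/
def Acyclic {V : Type*} (A : V → V → Prop) : Prop :=
  ∀ v, ¬ Relation.TransGen A v v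

/-- Every node of the digraph `A` is reachable from the root `r`. -/
def RootedAt {V : Type*} (A : V → V → Prop) (r : V) : Prop :=
  ∀ v, Relation.ReflTransGen A r v

/-! Let `j` label the in-edge `k → i` through a confluence whose first branch passes `k → i` and
then follows a path `Q` from `i` to `j`. Take a walk `R` from the root to `k'` and a second walk `W`
from the root to `j` meeting `Q` only in `j`: a walk to `k` followed by `k → i` if `i = j`, and
otherwise a walk to the start `s` of the confluence followed by its second branch. Branching off at
the last vertex `t` of `R` on `W`, the walks `t ⋯ k' → i ⋯ j` (along `R`, then `Q`) and `t ⋯ j`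
(along `W`) form a confluence ending in `j` through `k' → i`. Acyclicity turns every walk into a
path and keeps `R` off `Q`. -/

open List Relation

section Lists

variable {α : Type*} {R : α → α → Prop}

theorem List.mem_zip_tail_iff_infix {l : List α} {a b : α} :
    (a, b) ∈ l.zip l.tail ↔ [a, b] <:+: l := by
  induction l with
  | nil => simp
  | cons x l ih =>
    cases l with
    | nil => simp [infix_cons_iff]
    | cons y l =>
      rw [tail_cons] at ih
      simp [ih, infix_cons_iff]

theorem List.exists_eq_append_cons_forall_not_of_exists {p : α → Prop} {l : List α}
    (h : ∃ a ∈ l, p a) : ∃ s a t, l = s ++ a :: t ∧ p a ∧ ∀ b ∈ t, ¬ p b := by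
  induction l with
  | nil => simp at h
  | cons x l ih =>
    by_cases hl : ∃ a ∈ l, p a
    · obtain ⟨s, a, t, rfl, ha, ht⟩ := ih hl
      exact ⟨x :: s, a, t, rfl, ha, ht⟩
    · push Not at hl
      obtain ⟨a, ha, hpa⟩ := h
      rcases mem_cons.1 ha with rfl | ha
      · exact ⟨[], a, l, rfl, hpa, hl⟩
      · exact absurd hpa (hl a ha)

theorem List.IsChain.pairwise_transGen {l : List α} (h : l.IsChain R) :
    l.Pairwise (TransGen R) :=
  (h.imp fun _ _ => TransGen.single).pairwise

theorem List.IsChain.reflTransGen_of_mem_cons {a v : α} {l : List α} (h : (a :: l).IsChain R)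
    (hv : v ∈ a :: l) : ReflTransGen R a v := by
  rcases mem_cons.1 hv with rfl | hv
  · exact .refl
  · exact (pairwise_cons.1 h.pairwise_transGen).1 v hv |>.to_reflTransGen

theorem List.IsChain.reflTransGen_of_mem_concat {b v : α} {l : List α}
    (h : (l ++ [b]).IsChain R) (hv : v ∈ l ++ [b]) : ReflTransGen R v b := by
  rcases mem_append.1 hv with hv | hv
  · exact (pairwise_append.1 h.pairwise_transGen).2.2 v hv b (mem_singleton_self b)
      |>.to_reflTransGen
  · rw [mem_singleton.1 hv]

theorem List.exists_isChain_concat_of_relationReflTransGen {a b : α} (h : ReflTransGen R a b) :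
    ∃ l, (l ++ [b]).IsChain R ∧ (l ++ [b]).head? = some a := by
  induction h with
  | refl => exact ⟨[], isChain_singleton a, rfl⟩
  | tail _ hbc ih =>
    obtain ⟨l, hl, hla⟩ := ih
    refine ⟨l ++ [_], ?_, by simpa using hla⟩
    simpa [isChain_append, hbc] using hl

end Lists

theorem IsConfluence.symm {V : Type*} {A : V → V → Prop} {i j : V} {l₁ l₂ : List V}
    (h : IsConfluence A i j l₁ l₂) : IsConfluence A i j l₂ l₁ :=
  ⟨h.2.1, h.1, h.2.2.1.symm, fun v hv₂ hv₁ => h.2.2.2 v hv₁ hv₂⟩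

namespace Acyclic

variable {V : Type*} {A : V → V → Prop}

theorem nodup_of_isChain (hac : Acyclic A) {l : List V} (h : l.IsChain A) : l.Nodup :=
  h.pairwise_transGen.imp fun hab => by rintro rfl; exact hac _ hab

theorem diPath_of_isChain (hac : Acyclic A) {a b : V} {l : List V} (h : l.IsChain A)
    (ha : l.head? = some a) (hb : l.getLast? = some b) (hab : a ≠ b) : DiPath A a b l := by
  refine ⟨h, ha, hb, hac.nodup_of_isChain h, ?_⟩
  match l, ha, hb with
  | [_], ha, hb => simp_all
  | _ :: _ :: _, _, _ => simp

theorem eq_nil_of_isChain_cons (hac : Acyclic A) {a : V} {l : List V}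
    (h : (a :: l).IsChain A) (hl : (a :: l).getLast? = some a) : l = [] := by
  cases l with
  | nil => rfl
  | cons b l =>
    rw [getLast?_cons_cons] at hl
    exact absurd ((pairwise_cons.1 h.pairwise_transGen).1 a (mem_of_getLast? hl)) (hac a)

theorem confLabel_of_walks (hac : Acyclic A) {r i j k' : V} {R Q₀ W : List V}
    (hRQ : (R ++ k' :: i :: Q₀).IsChain A) (hRr : (R ++ [k']).head? = some r)
    (hQj : (i :: Q₀).getLast? = some j)
    (hW : W.IsChain A) (hWr : W.head? = some r) (hWj : W.getLast? = some j)
    (hQW : ∀ v ∈ i :: Q₀, v ∈ W → v = j) (hsuf : ¬ k' :: i :: Q₀ <:+ W) :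
    ConfLabel A (k', i) j := by
  obtain ⟨s₁, t, u₁, hsplit, htW, hu₁⟩ := exists_eq_append_cons_forall_not_of_exists
    ⟨r, mem_of_mem_head? hRr, mem_of_mem_head? hWr⟩
  obtain ⟨s₂, u₂, rfl⟩ := append_of_mem htW
  have hB₁ : t :: (u₁ ++ i :: Q₀) <:+ R ++ k' :: i :: Q₀ :=
    ⟨s₁, by simpa using congrArg (· ++ i :: Q₀) hsplit.symm⟩
  have hB₂ : t :: u₂ <:+ s₂ ++ t :: u₂ := suffix_append _ _
  have htj : t ≠ j := by
    rintro rfl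
    have hnd := hac.nodup_of_isChain hRQ
    rw [← singleton_append, ← append_assoc, hsplit] at hnd
    exact disjoint_of_nodup_append hnd (by simp) (mem_of_getLast? hQj)
  have hsufB₁ : k' :: i :: Q₀ <:+ t :: (u₁ ++ i :: Q₀) :=
    suffix_of_suffix_length_le (suffix_append R _) hB₁ (by simp)
  refine ⟨t, _, _, ⟨hac.diPath_of_isChain (hRQ.suffix hB₁) rfl
    (by rw [← cons_append, getLast?_append, hQj]; rfl) htj,
    hac.diPath_of_isChain (hW.suffix hB₂) rfl ?_ htj, ?_, ?_⟩,
    Or.inl (mem_zip_tail_iff_infix.2 ((prefix_append [k', i] Q₀).isInfix.trans hsufB₁.isInfix))⟩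
  · rwa [getLast?_append_cons] at hWj
  · intro heq
    exact hsuf ((heq ▸ hsufB₁).trans hB₂)
  · intro v hv₁ hv₂
    have hvW := hB₂.subset hv₂
    rcases mem_cons.1 hv₁ with rfl | hv
    · exact Or.inl rfl
    rcases mem_append.1 hv with hv | hv
    · exact absurd hvW (hu₁ v hv)
    · exact Or.inr (hQW v hv hvW)

theorem confLabel_of_isConfluence (hac : Acyclic A) {r s i j k k' : V} {l₁ l₂ : List V}
    (hr : RootedAt A r) (hk : A k i) (hk' : A k' i) (hkk' : k ≠ k')
    (hconf : IsConfluence A s j l₁ l₂) (hki : [k, i] <:+: l₁) :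
    ConfLabel A (k', i) j := by
  obtain ⟨⟨h₁, h₁s, h₁j, -, -⟩, ⟨h₂, h₂s, h₂j, -, -⟩, -, hdisj⟩ := hconf
  obtain ⟨P, Q₀, rfl⟩ := hki
  rw [append_assoc, cons_append, cons_append, nil_append] at h₁ h₁s h₁j hdisj
  have hQ : (i :: Q₀).IsChain A := h₁.suffix ⟨P ++ [k], by simp⟩
  have hQj : (i :: Q₀).getLast? = some j := by
    rwa [getLast?_append_cons, getLast?_cons_cons] at h₁j
  have hsi : TransGen A s i := by
    have hPk : (P ++ [k]).IsChain A := h₁.prefix ⟨i :: Q₀, by simp⟩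
    refine .tail' (hPk.reflTransGen_of_mem_concat ?_) hk
    cases P <;> simp_all
  obtain ⟨R, hR, hRr⟩ := exists_isChain_concat_of_relationReflTransGen (hr k')
  have hRQ : (R ++ k' :: i :: Q₀).IsChain A := by
    simpa using hR.append_overlap (l₃ := i :: Q₀) (isChain_cons_cons.2 ⟨hk', hQ⟩) (by simp)
  by_cases hij : i = j
  · -- `W` is a walk to `k` followed by `k → i`; its last edge is not `k' → i`.
    subst hij
    obtain rfl : Q₀ = [] := hac.eq_nil_of_isChain_cons hQ hQj
    obtain ⟨S, hS, hSr⟩ := exists_isChain_concat_of_relationReflTransGen (hr k)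
    refine hac.confLabel_of_walks hRQ hRr hQj (W := S ++ [k, i]) ?_ (by simpa using hSr)
      (by simp) (by simp) fun hsuf => hkk' ?_
    · simpa using hS.append_overlap (l₃ := [i]) (isChain_pair.2 hk) (by simp)
    · have hsuf' := suffix_of_suffix_length_le hsuf (suffix_append S [k, i]) (by simp)
      simpa [eq_comm] using hsuf'.eq_of_length (by simp)
  · -- `W` is a walk to `s` followed by `l₂`: the walk to `s` avoids `i :: Q₀` since `s →⁺ i`,
    -- and `l₂` meets it only in `j` by the disjointness of the confluence branches.
    obtain ⟨L₂, rfl⟩ := head?_eq_some_iff.1 h₂s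
    obtain ⟨S, hS, hSr⟩ := exists_isChain_concat_of_relationReflTransGen (hr s)
    have hQS : ∀ v ∈ i :: Q₀, v ∉ S ++ [s] := fun v hvQ hvS =>
      hac i (.trans_right ((hQ.reflTransGen_of_mem_cons hvQ).trans
        (hS.reflTransGen_of_mem_concat hvS)) hsi)
    have hQW : ∀ v ∈ i :: Q₀, v ∈ S ++ s :: L₂ → v = j := by
      intro v hvQ hvW
      rcases mem_append.1 hvW with hv | hv
      · exact absurd (mem_append_left _ hv) (hQS v hvQ)
      rcases hdisj v (mem_append_right _ (mem_cons_of_mem k hvQ)) hv with rfl | rfl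
      · exact absurd (mem_append_right _ (mem_singleton_self _)) (hQS _ hvQ)
      · rfl
    refine hac.confLabel_of_walks hRQ hRr hQj (W := S ++ s :: L₂) ?_ (by simpa using hSr)
      (by rwa [getLast?_append_cons]) hQW
      fun hsuf => hij (hQW i (mem_cons_self ..) (hsuf.subset (by simp)))
    simpa using hS.append_overlap h₂ (by simp)

theorem confLabel_of_confLabel (hac : Acyclic A) {r i j k k' : V} (hr : RootedAt A r)
    (hk : A k i) (hk' : A k' i) (h : ConfLabel A (k, i) j) : ConfLabel A (k', i) j := by
  obtain rfl | hkk' := eq_or_ne k k'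
  · exact h
  obtain ⟨s, l₁, l₂, hconf, hmem | hmem⟩ := h
  · exact hac.confLabel_of_isConfluence hr hk hk' hkk' hconf (mem_zip_tail_iff_infix.1 hmem)
  · exact hac.confLabel_of_isConfluence hr hk hk' hkk' hconf.symm (mem_zip_tail_iff_infix.1 hmem)

end Acyclic

/-- In a rooted extraction order with the confluence edge label assignment, any two
in-edges of a node `i` have equal label sets. -/
theorem stmt10 {V : Type*} (A : V → V → Prop) (r : V) (hac : Acyclic A)
    (hr : RootedAt A r) (i k k' : V) (hk : A k i) (hk' : A k' i) :
    ConfSet A (k, i) = ConfSet A (k', i) := by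
  ext j
  exact ⟨hac.confLabel_of_confLabel hr hk hk', hac.confLabel_of_confLabel hr hk' hk⟩
end

section
/- Let G⃗ be a rooted extraction order with a decomposable edge label assignment, and let k be a node occurring as a label in some edge label set. Then every in-edge of k is labeled with k, i.e., k ∈ L_e for every in-edge e of k. -/
/-- The nodes of the label-induced subgraph for the label `k`: endpoints of edges
labeled with `k`. -/
def LabelNodes {V : Type*} (A : V → V → Prop) (L : V × V → Set V) (k : V) : Set V :=
  {v | ∃ w, (A v w ∧ k ∈ L (v, w)) ∨ (A w v ∧ k ∈ L (w, v))}

/-- A decomposable edge label assignment `L` for the digraph `A`: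
it extends the confluence edge labels, every label-induced subgraph is connected and
rooted, every label node lies in its own label-induced subgraph, all in-edges of a
node carry the same label set, and no out-edge of `k` is labeled with `k`. -/
structure DecomposableLabels {V : Type*} (A : V → V → Prop) (L : V × V → Set V) :
    Prop where
  extends_confluence : ∀ (e : V × V) (j : V), ConfLabel A e j → j ∈ L e
  rooted_label_subgraph : ∀ k : V, (∃ v w, A v w ∧ k ∈ L (v, w)) →
    ∃ ρ ∈ LabelNodes A L k, ∀ v ∈ LabelNodes A L k,
      Relation.ReflTransGen (fun x y => A x y ∧ k ∈ L (x, y)) ρ v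
  mem_own_subgraph : ∀ k : V, (∃ v w, A v w ∧ k ∈ L (v, w)) → k ∈ LabelNodes A L k
  in_edges_eq : ∀ i k k' : V, A k i → A k' i → L (k, i) = L (k', i)
  not_self_labeled : ∀ k w : V, A k w → k ∉ L (k, w)

/-- In a rooted extraction order with a decomposable edge label assignment, if `k`
occurs as a label then every in-edge of `k` is labeled with `k`. -/
theorem stmt11 {V : Type*} (A : V → V → Prop) (r : V) (hac : Acyclic A)
    (hr : RootedAt A r) (L : V × V → Set V) (hL : DecomposableLabels A L) (k : V)
    (hk : ∃ v w, A v w ∧ k ∈ L (v, w)) :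
    ∀ j, A j k → k ∈ L (j, k) := by
  intro j hj
  obtain ⟨w, hw | hw⟩ := hL.mem_own_subgraph k hk
  · exact absurd hw.2 (hL.not_self_labeled k w hw.1)
  · have := hL.in_edges_eq k j w hj hw.1
    rw [this]
    exact hw.2
end

section
/- Let G⃗ be a rooted extraction order with a decomposable edge label assignment, let k be a node occurring as a label, and let i ≠ k be a node of the label-induced subgraph for k (i.e., some edge incident to i is labeled with k). Then every directed path in G⃗ from i to k consists entirely of edges labeled with k. -/
/-!
Let `ρ` be the root of the label-induced subgraph for `k`. Every node `w ≠ ρ` of that subgraph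
is entered by a `k`-labeled edge (the last edge of a labeled path from `ρ`), and so is `k`
itself, since no out-edge of `k` carries `k`. As all in-edges of a node carry the same labels,
every in-edge of such a node is labeled `k`. Walking a path from `i` to `k` backwards, each edge
is therefore labeled, provided no node after `i` is `ρ`; and that holds because `ρ` reaches `i`,
so a visit to `ρ` after `i` would close a cycle.
-/

namespace List

variable {α : Type*} {R : α → α → Prop}

theorem IsChain.rel_of_mem_zip_tail :
    ∀ {l : List α}, IsChain R l → ∀ {x y : α}, (x, y) ∈ l.zip l.tail → R x y
  | [], _, _, _, hxy => by simp at hxy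
  | [_], _, _, _, hxy => by simp at hxy
  | _ :: _ :: _, h, _, _, hxy => by
    rw [isChain_cons_cons] at h
    rw [tail_cons, zip_cons_cons, mem_cons, Prod.mk.injEq] at hxy
    rcases hxy with ⟨rfl, rfl⟩ | hxy
    · exact h.1
    · exact h.2.rel_of_mem_zip_tail hxy

theorem IsChain.transGen_of_mem {a b : α} :
    ∀ {l : List α}, IsChain R (a :: l) → b ∈ l → Relation.TransGen R a b
  | _ :: _, h, hb => by
    rw [isChain_cons_cons] at h
    rcases mem_cons.mp hb with rfl | hb
    · exact .single h.1
    · exact .head h.1 (h.2.transGen_of_mem hb)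

end List

def InEdgesLabeled {V : Type*} (A : V → V → Prop) (L : V × V → Set V) (k w : V) : Prop :=
  ∀ u, A u w → k ∈ L (u, w)

namespace DecomposableLabels

variable {V : Type*} {A : V → V → Prop} {L : V × V → Set V} {k ρ u v w : V}

theorem inEdgesLabeled_of_adj (hL : DecomposableLabels A L) (hu : A u w) (huw : k ∈ L (u, w)) :
    InEdgesLabeled A L k w :=
  fun _ hv => hL.in_edges_eq w _ u hv hu ▸ huw

theorem inEdgesLabeled_self (hL : DecomposableLabels A L)
    (hk : ∃ v w, A v w ∧ k ∈ L (v, w)) : InEdgesLabeled A L k k := by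
  obtain ⟨w, ⟨hkw, hkL⟩ | ⟨hwk, hwL⟩⟩ := hL.mem_own_subgraph k hk
  · exact absurd hkL (hL.not_self_labeled k w hkw)
  · exact hL.inEdgesLabeled_of_adj hwk hwL

theorem inEdgesLabeled_of_adj_of_ne_root (hL : DecomposableLabels A L)
    (hρ : ∀ v ∈ LabelNodes A L k,
      Relation.ReflTransGen (fun x y => A x y ∧ k ∈ L (x, y)) ρ v)
    (hvρ : v ≠ ρ) (hvw : A v w) (hw : InEdgesLabeled A L k w) : InEdgesLabeled A L k v := by
  rcases (hρ v ⟨w, .inl ⟨hvw, hw v hvw⟩⟩).cases_tail with rfl | ⟨u, -, hu, huv⟩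
  · exact absurd rfl hvρ
  · exact hL.inEdgesLabeled_of_adj hu huv

theorem inEdgesLabeled_of_mem_of_isChain (hL : DecomposableLabels A L)
    (hk : ∃ v w, A v w ∧ k ∈ L (v, w))
    (hρ : ∀ v ∈ LabelNodes A L k,
      Relation.ReflTransGen (fun x y => A x y ∧ k ∈ L (x, y)) ρ v)
    {t : List V} (ht : t.IsChain A) (hlast : ∀ hne : t ≠ [], t.getLast hne = k) (hρt : ρ ∉ t) :
    ∀ v ∈ t, InEdgesLabeled A L k v := by
  have ht' : t.IsChain fun x y => A x y ∧ x ≠ ρ :=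
    (List.IsChain.iff_mem.mp ht).imp fun x _ ⟨hx, _, hxy⟩ => ⟨hxy, ne_of_mem_of_not_mem hx hρt⟩
  refine ht'.backwards_induction _ _ (fun x y ⟨hxy, hxρ⟩ hy => ?_) fun hne => ?_
  · exact hL.inEdgesLabeled_of_adj_of_ne_root hρ hxρ hxy hy
  · rw [hlast hne]
    exact hL.inEdgesLabeled_self hk

end DecomposableLabels

theorem stmt12_general {V : Type*} (A : V → V → Prop) (hac : Acyclic A)
    (L : V × V → Set V) (hL : DecomposableLabels A L) (k : V)
    (hk : ∃ v w, A v w ∧ k ∈ L (v, w)) (i : V)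
    (hi : i ∈ LabelNodes A L k) (l : List V) (hl : DiPath A i k l) :
    ∀ e ∈ l.zip l.tail, k ∈ L e := by
  obtain ⟨hchain, hhead, hlast, -, -⟩ := hl
  obtain ⟨t, rfl⟩ := List.head?_eq_some_iff.mp hhead
  obtain ⟨ρ, -, hρ⟩ := hL.rooted_label_subgraph k hk
  have hρi : Relation.ReflTransGen A ρ i :=
    Relation.ReflTransGen.mono (fun _ _ h => h.1) _ _ (hρ i hi)
  have hρt : ρ ∉ t := fun hρt => hac i ((hchain.transGen_of_mem hρt).trans_left hρi)
  have hlast' : ∀ hne : t ≠ [], t.getLast hne = k := fun hne => by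
    simpa [List.getLast?_cons, List.getLast?_eq_some_getLast hne] using hlast
  have hin := hL.inEdgesLabeled_of_mem_of_isChain hk hρ hchain.tail hlast' hρt
  rintro ⟨u, v⟩ he
  exact hin v (List.of_mem_zip he).2 u (hchain.rel_of_mem_zip_tail he)

/-- Label path continuity: in a rooted extraction order with a decomposable edge
label assignment, if `i ≠ k` is a node of the label-induced subgraph for a label `k`,
then every directed path from `i` to `k` consists entirely of edges labeled with `k`. -/
theorem stmt12 {V : Type*} (A : V → V → Prop) (r : V) (hac : Acyclic A)
    (hr : RootedAt A r) (L : V × V → Set V) (hL : DecomposableLabels A L) (k : V)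
    (hk : ∃ v w, A v w ∧ k ∈ L (v, w)) (i : V) (hik : i ≠ k)
    (hi : i ∈ LabelNodes A L k) (l : List V) (hl : DiPath A i k l) :
    ∀ e ∈ l.zip l.tail, k ∈ L e :=
  stmt12_general A hac L hL k hk i hi l hl
end

section
/- Let W_n be the half-wheel graph with center w_c and n outer nodes, with n odd. There exists an extraction order of W_n rooted at the center node w_c, together with an extraction label set ordering Ω, whose extraction label width lw(G⃗, Ω) = 1 + max label set size equals 3. Concretely, orienting all radial edges outward from w_c and orienting outer edges alternately so that all odd-indexed outer nodes are confluence end nodes, the label sets {w_1, w_3}, {w_3, w_5}, ..., {w_{n−2}, w_n} form a running intersection ordering at the root in which every out-edge's confluence label set is contained in some listed set, and all label sets have size at most 2. -/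
/-- A list of sets is a running intersection ordering: for each index `a ≥ 1` there is
an earlier index `b` such that `l[a] ∩ (⋃_{c < a} l[c]) ⊆ l[b]`. -/
def RIPs {α : Type*} (l : List (Set α)) : Prop :=
  ∀ (a : ℕ) (ha : a < l.length), 0 < a → ∃ (b : ℕ) (hb : b < l.length), b < a ∧
    ∀ x ∈ l.get ⟨a, ha⟩, (∃ S ∈ l.take a, x ∈ S) → x ∈ l.get ⟨b, hb⟩

/-- An extraction label set ordering `Ω` for the digraph `A` with edge label
assignment `L`: for each node `i`, `Ω i` is a running intersection ordering that
starts with the incoming label set of `i` (the common label set of `i`'s in-edges,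
`∅` if `i` has none), and each out-edge's label set is contained in some listed set. -/
def IsELSO {V : Type*} (A : V → V → Prop) (L : V × V → Set V)
    (Ω : V → List (Set V)) : Prop :=
  ∀ i : V, RIPs (Ω i) ∧
    (∀ j, A j i → (Ω i).head? = some (L (j, i))) ∧
    ((¬ ∃ j, A j i) → (Ω i).head? = some ∅) ∧
    (∀ w, A i w → ∃ S ∈ Ω i, L (i, w) ⊆ S)

/-- The width of an extraction label set ordering: one plus the size of the largest
label set occurring in it. -/
noncomputable def elsoWidth {V : Type*} (Ω : V → List (Set V)) : ℕ :=
  1 + sSup {m | ∃ i, ∃ S ∈ Ω i, m = S.ncard}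

/-- The half-wheel graph with center `0` and outer nodes `1, …, n`:
the center is adjacent to every outer node and consecutive outer nodes are adjacent. -/
def halfWheelAdj (n : ℕ) (v w : Fin (n + 1)) : Prop :=
  v ≠ w ∧ (v = 0 ∨ w = 0 ∨ (v : ℕ) + 1 = (w : ℕ) ∨ (w : ℕ) + 1 = (v : ℕ))

/-!
Orient every edge of the half wheel towards the higher `rank`: the centre has rank `0`, even outer
nodes rank `1` and odd outer nodes rank `2`. Directed paths then have at most two edges, so a
confluence is made of paths `i → j`, `i → m → j` (or two of the latter) and ends at a node with two
in-neighbours, that is, at an odd outer node. Hence an edge into an odd node `v` carries the label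
set `{v}` and an edge into an even node `v` carries `{v - 1, v + 1}`. All of these lie in one of
the pairs `{1, 3}, {3, 5}, …, {n - 2, n}`, and consecutive pairs overlap in one node, so these
pairs form a running intersection ordering at the centre whose sets have size two.
-/

section Digraph

variable {V : Type*} {A : V → V → Prop}

theorem acyclic_of_rank_lt {α : Type*} [Preorder α] {f : V → α}
    (hf : ∀ v w, A v w → f v < f w) : Acyclic A := fun v hv =>
  lt_irrefl (f v) (by simpa [Relation.transGen_eq_self] using Relation.TransGen.lift f hf v v hv)

theorem rootedAt_of_forall_ne {r : V} (h : ∀ v, v ≠ r → A r v) : RootedAt A r := fun v =>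
  (eq_or_ne v r).elim (fun hv => hv ▸ .refl) fun hv => .single (h v hv)

theorem Acyclic.ne_of_adj (hA : Acyclic A) {v w : V} (h : A v w) : v ≠ w :=
  fun hvw => hA v (.single (hvw ▸ h))

theorem DiPath.eq_pair_or_eq_triple (hshort : ∀ a b c d, A a b → A b c → ¬ A c d)
    {i j : V} {l : List V} (h : DiPath A i j l) :
    l = [i, j] ∧ A i j ∨ ∃ m, l = [i, m, j] ∧ A i m ∧ A m j := by
  obtain ⟨hc, hh, hl, -, hlen⟩ := h
  replace hc : l.IsChain A := hc
  rcases l with _ | ⟨a, _ | ⟨b, _ | ⟨c, _ | ⟨d, rest⟩⟩⟩⟩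
  · simp at hlen
  · simp at hlen
  · simp_all
  · simp_all
  · simp only [List.isChain_cons_cons] at hc
    exact (hshort a b c d hc.1 hc.2.1 hc.2.2.1).elim

theorem DiPath.eq_or_adj_of_mem_zip (hshort : ∀ a b c d, A a b → A b c → ¬ A c d)
    {i j u v : V} {l : List V} (h : DiPath A i j l) (he : (u, v) ∈ l.zip l.tail) :
    v = j ∨ A v j := by
  rcases h.eq_pair_or_eq_triple hshort with ⟨rfl, -⟩ | ⟨m, rfl, -, hmj⟩
  · simp_all
  · simp only [List.tail_cons, List.zip_cons_cons, List.zip_nil_right, List.mem_cons,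
      Prod.mk.injEq, List.not_mem_nil, or_false] at he
    rcases he with ⟨-, rfl⟩ | ⟨-, rfl⟩
    · exact .inr hmj
    · exact .inl rfl

theorem IsConfluence.exists_two_preds (hshort : ∀ a b c d, A a b → A b c → ¬ A c d)
    {i j : V} {l₁ l₂ : List V} (h : IsConfluence A i j l₁ l₂) :
    ∃ p q, p ≠ q ∧ A p j ∧ A q j := by
  obtain ⟨h₁, h₂, hne, hdisj⟩ := h
  rcases h₁.eq_pair_or_eq_triple hshort with ⟨rfl, hij⟩ | ⟨m₁, rfl, -, hm₁⟩ <;>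
    rcases h₂.eq_pair_or_eq_triple hshort with ⟨rfl, hij⟩ | ⟨m₂, rfl, -, hm₂⟩
  · exact (hne rfl).elim
  · have hnd := h₂.2.2.2.1
    exact ⟨i, m₂, by simp_all, hij, hm₂⟩
  · have hnd := h₁.2.2.2.1
    exact ⟨m₁, i, by simp_all [eq_comm], hm₁, hij⟩
  · refine ⟨m₁, m₂, fun h => ?_, hm₁, hm₂⟩
    have hnd := h₁.2.2.2.1
    have := hdisj m₁ (by simp) (by simp [h])
    simp_all

theorem ConfLabel.of_triangle (hA : Acyclic A) {i m j : V} (hij : A i j) (him : A i m)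
    (hmj : A m j) {e : V × V} (he : e = (i, j) ∨ e = (i, m) ∨ e = (m, j)) :
    ConfLabel A e j := by
  have hij' : i ≠ j := fun h => hA i (.tail (.single him) (h ▸ hmj))
  have hconf : IsConfluence A i j [i, j] [i, m, j] := by
    refine ⟨⟨List.isChain_pair.2 hij, rfl, rfl, by simpa using hij', le_rfl⟩,
      ⟨List.isChain_cons_cons.2 ⟨him, List.isChain_pair.2 hmj⟩, rfl, rfl,
        by simp [hij', hA.ne_of_adj him, hA.ne_of_adj hmj], by simp⟩, by simp, by simp⟩
  refine ⟨i, _, _, hconf, ?_⟩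
  rcases he with rfl | rfl | rfl <;> simp

end Digraph

section RunningIntersection

variable {α : Type*}

theorem rips_singleton (S : Set α) : RIPs [S] := fun a ha hpos => by
  simp only [List.length_singleton] at ha; omega

theorem RIPs.cons_empty {l : List (Set α)} (h : RIPs l) : RIPs (∅ :: l) := by
  rintro (_ | a) ha ha0
  · exact absurd ha0 (lt_irrefl 0)
  rcases Nat.eq_zero_or_pos a with rfl | hpos
  · exact ⟨0, by simp, by omega, by simp⟩
  obtain ⟨b, hb, hba, hsub⟩ := h a (by simpa using ha) hpos
  refine ⟨b + 1, by simpa using hb, by omega, fun x hx ⟨S, hS, hxS⟩ => ?_⟩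
  simp only [List.take_succ_cons, List.mem_cons] at hS
  rcases hS with rfl | hS
  · exact hxS.elim
  · simpa using hsub x (by simpa using hx) ⟨S, hS, hxS⟩

theorem rips_map_range {f : ℕ → Set α} (hf : ∀ c a, c ≤ a → f (a + 1) ∩ f c ⊆ f a) (m : ℕ) :
    RIPs ((List.range m).map f) := by
  rintro (_ | a) ha ha0
  · exact absurd ha0 (lt_irrefl 0)
  simp only [List.length_map, List.length_range] at ha
  refine ⟨a, by simp only [List.length_map, List.length_range]; omega, by omega, fun x hx ⟨S, hS, hxS⟩ => ?_⟩
  rw [← List.map_take, List.take_range] at hS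
  obtain ⟨c, hc, rfl⟩ := List.mem_map.1 hS
  simp only [List.get_eq_getElem, List.getElem_map, List.getElem_range] at hx ⊢
  exact hf c a (by rw [List.mem_range] at hc; omega) ⟨hx, hxS⟩

theorem elsoWidth_eq {V : Type*} {Ω : V → List (Set V)} {k : ℕ}
    (hle : ∀ i, ∀ S ∈ Ω i, S.ncard ≤ k) {i : V} {S : Set V} (hS : S ∈ Ω i)
    (hk : S.ncard = k) : elsoWidth Ω = 1 + k := by
  have hmax : IsGreatest {m | ∃ i, ∃ S ∈ Ω i, m = S.ncard} k :=
    ⟨⟨i, S, hS, hk.symm⟩, fun _ ⟨j, T, hT, hm⟩ => hm ▸ hle j T hT⟩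
  rw [elsoWidth, hmax.csSup_eq]

end RunningIntersection

theorem ncard_preimage_val_pair_le {N : ℕ} (a b : ℕ) :
    (Fin.val ⁻¹' {a, b} : Set (Fin N)).ncard ≤ 2 :=
  (Set.ncard_le_ncard_of_injOn Fin.val (fun _ h => h) Fin.val_injective.injOn
    ((Set.finite_singleton b).insert a)).trans ((Set.ncard_insert_le a {b}).trans (by simp))

namespace HalfWheel

variable {n : ℕ}

def rank (v : Fin (n + 1)) : ℕ := min (v : ℕ) 1 + (v : ℕ) % 2

def orient (n : ℕ) (v w : Fin (n + 1)) : Prop := halfWheelAdj n v w ∧ rank v < rank w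

theorem orient_iff {v w : Fin (n + 1)} : orient n v w ↔
    (v : ℕ) = 0 ∧ (w : ℕ) ≠ 0 ∨
      (v : ℕ) ≠ 0 ∧ (v : ℕ) % 2 = 0 ∧ ((w : ℕ) = v + 1 ∨ (w : ℕ) + 1 = v) := by
  simp only [orient, halfWheelAdj, rank, ne_eq, Fin.ext_iff, Fin.val_zero]
  omega

theorem halfWheelAdj_symm {v w : Fin (n + 1)} (h : halfWheelAdj n v w) : halfWheelAdj n w v :=
  ⟨h.1.symm, by obtain ⟨-, h⟩ := h; tauto⟩

theorem rank_ne_of_adj {v w : Fin (n + 1)} (h : halfWheelAdj n v w) : rank v ≠ rank w := by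
  simp only [halfWheelAdj, rank, ne_eq, Fin.ext_iff, Fin.val_zero] at h ⊢
  omega

theorem orient_or_orient_of_adj {v w : Fin (n + 1)} (h : halfWheelAdj n v w) :
    orient n v w ∨ orient n w v := by
  rcases (rank_ne_of_adj h).lt_or_gt with hlt | hgt
  · exact .inl ⟨h, hlt⟩
  · exact .inr ⟨halfWheelAdj_symm h, hgt⟩

theorem not_orient_three (a b c d : Fin (n + 1)) :
    orient n a b → orient n b c → ¬ orient n c d := by
  intro hab hbc hcd
  simp only [orient, rank] at hab hbc hcd
  omega

theorem orient_zero_of_ne {v : Fin (n + 1)} (hv : v ≠ 0) : orient n 0 v :=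
  orient_iff.2 (.inl ⟨Fin.val_zero _, Fin.val_ne_zero_iff.2 hv⟩)

theorem not_orient_zero (v : Fin (n + 1)) : ¬ orient n v 0 := by
  rw [orient_iff]
  simp only [Fin.val_zero]
  omega

theorem ne_zero_of_orient {u v : Fin (n + 1)} (h : orient n u v) : v ≠ 0 :=
  fun hv => not_orient_zero u (hv ▸ h)

theorem eq_zero_of_orient_of_orient {u v w : Fin (n + 1)} (huv : orient n u v)
    (hvw : orient n v w) : u = 0 := by
  rw [orient_iff] at huv hvw
  rw [Fin.ext_iff, Fin.val_zero]
  omega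

theorem acyclic_orient : Acyclic (orient n) := acyclic_of_rank_lt fun _ _ h => h.2

theorem odd_of_orient_of_orient {p q j : Fin (n + 1)} (hpq : p ≠ q) (hp : orient n p j)
    (hq : orient n q j) : (j : ℕ) % 2 = 1 := by
  rw [orient_iff] at hp hq
  rw [ne_eq, Fin.ext_iff] at hpq
  omega

theorem exists_orient_of_odd (hn : 2 ≤ n) {j : Fin (n + 1)} (hj : (j : ℕ) % 2 = 1) :
    ∃ m, m ≠ 0 ∧ orient n m j := by
  have hjn := j.isLt
  by_cases hj1 : (j : ℕ) = 1
  · refine ⟨⟨2, by omega⟩, by simp [Fin.ext_iff], orient_iff.2 ?_⟩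
    simp [hj1]
  · refine ⟨⟨j - 1, by omega⟩, by simp [Fin.ext_iff]; omega, orient_iff.2 ?_⟩
    simp only
    omega

def labels (v : Fin (n + 1)) : Set (Fin (n + 1)) :=
  {j | (j : ℕ) % 2 = 1 ∧ (v = j ∨ orient n v j)}

theorem confSet_eq_labels (hn : 2 ≤ n) {u v : Fin (n + 1)} (h : orient n u v) :
    ConfSet (orient n) (u, v) = labels v := by
  ext j
  constructor
  · rintro ⟨i, l₁, l₂, hc, he⟩
    obtain ⟨p, q, hpq, hp, hq⟩ := hc.exists_two_preds not_orient_three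
    refine ⟨odd_of_orient_of_orient hpq hp hq, ?_⟩
    rcases he.elim (hc.1.eq_or_adj_of_mem_zip not_orient_three)
      (hc.2.1.eq_or_adj_of_mem_zip not_orient_three) with rfl | hvj
    · exact .inl rfl
    · exact .inr hvj
  · rintro ⟨hj, rfl | hvj⟩
    · have hv := ne_zero_of_orient h
      rcases eq_or_ne u 0 with rfl | hu
      · obtain ⟨m, hm, hmv⟩ := exists_orient_of_odd hn hj
        exact .of_triangle acyclic_orient h (orient_zero_of_ne hm) hmv (.inl rfl)
      · exact .of_triangle acyclic_orient (orient_zero_of_ne hv) (orient_zero_of_ne hu) h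
          (.inr (.inr rfl))
    · obtain rfl := eq_zero_of_orient_of_orient h hvj
      exact .of_triangle acyclic_orient (orient_zero_of_ne (ne_zero_of_orient hvj)) h hvj
        (.inr (.inl rfl))

theorem labels_subset_of_orient {v w : Fin (n + 1)} (hv : v ≠ 0) (h : orient n v w) :
    labels w ⊆ labels v := by
  rintro j ⟨hj, hwj | hwj⟩
  · exact ⟨hj, .inr (hwj ▸ h)⟩
  · exact (hv (eq_zero_of_orient_of_orient h hwj)).elim

theorem ncard_labels_le {v : Fin (n + 1)} (hv : v ≠ 0) : (labels v).ncard ≤ 2 := by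
  have hv' : (v : ℕ) ≠ 0 := Fin.val_ne_zero_iff.2 hv
  obtain ⟨a, b, hsub⟩ : ∃ a b : ℕ, labels v ⊆ Fin.val ⁻¹' {a, b} := by
    rcases Nat.mod_two_eq_zero_or_one v with hev | hodd
    · refine ⟨v - 1, v + 1, fun j ⟨hj, hvj⟩ => ?_⟩
      rw [orient_iff, Fin.ext_iff] at hvj
      simp only [Set.mem_preimage, Set.mem_insert_iff, Set.mem_singleton_iff]
      omega
    · refine ⟨v, v, fun j ⟨hj, hvj⟩ => ?_⟩
      rw [orient_iff, Fin.ext_iff] at hvj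
      simp only [Set.mem_preimage, Set.mem_insert_iff, Set.mem_singleton_iff]
      omega
  exact (Set.ncard_le_ncard hsub (Set.toFinite _)).trans (ncard_preimage_val_pair_le a b)

def oddPair (n k : ℕ) : Set (Fin (n + 1)) := Fin.val ⁻¹' {2 * k + 1, 2 * k + 3}

theorem mem_oddPair {k : ℕ} {x : Fin (n + 1)} :
    x ∈ oddPair n k ↔ (x : ℕ) = 2 * k + 1 ∨ (x : ℕ) = 2 * k + 3 := Iff.rfl

theorem oddPair_inter_subset {c a : ℕ} (hca : c ≤ a) :
    oddPair n (a + 1) ∩ oddPair n c ⊆ oddPair n a := by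
  rintro x ⟨hxa, hxc⟩
  rw [mem_oddPair] at *
  omega

theorem ncard_oddPair {k : ℕ} (hk : 2 * k + 3 ≤ n) : (oddPair n k).ncard = 2 := by
  rw [oddPair, Set.ncard_preimage_of_injective_subset_range Fin.val_injective, Set.ncard_pair]
  · omega
  · simp only [Set.insert_subset_iff, Set.singleton_subset_iff, Set.mem_range]
    exact ⟨⟨⟨_, by omega⟩, rfl⟩, ⟨_, by omega⟩, rfl⟩

theorem exists_oddPair_superset (hn : 3 ≤ n) (hodd : Odd n) {w : Fin (n + 1)} (hw : w ≠ 0) :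
    ∃ k < (n - 1) / 2, labels w ⊆ oddPair n k := by
  have hw' : (w : ℕ) ≠ 0 := Fin.val_ne_zero_iff.2 hw
  have hodd' := Nat.odd_iff.1 hodd
  refine ⟨min ((w - 1) / 2) ((n - 3) / 2), by omega, fun j ⟨hj, hwj⟩ => ?_⟩
  have hjn := j.isLt
  have hwn := w.isLt
  rw [orient_iff, Fin.ext_iff] at hwj
  rw [mem_oddPair]
  omega

def ordering (n : ℕ) (v : Fin (n + 1)) : List (Set (Fin (n + 1))) :=
  if v = 0 then ∅ :: (List.range ((n - 1) / 2)).map (oddPair n) else [labels v]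

theorem isELSO_ordering (hn : 3 ≤ n) (hodd : Odd n) :
    IsELSO (orient n) (ConfSet (orient n)) (ordering n) := by
  intro v
  rcases eq_or_ne v 0 with rfl | hv
  · refine ⟨(rips_map_range (fun _ _ => oddPair_inter_subset) _).cons_empty,
      fun j hj => (not_orient_zero j hj).elim, fun _ => by simp [ordering], fun w hw => ?_⟩
    obtain ⟨k, hk, hsub⟩ := exists_oddPair_superset hn hodd (ne_zero_of_orient hw)
    refine ⟨oddPair n k, ?_, by rwa [confSet_eq_labels (by omega) hw]⟩
    simp only [ordering, if_true]
    exact List.mem_cons_of_mem _ (List.mem_map_of_mem (List.mem_range.2 hk))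
  · simp only [ordering, if_neg hv]
    refine ⟨rips_singleton _, fun j hj => by rw [confSet_eq_labels (by omega) hj]; rfl,
      fun h => (h ⟨0, orient_zero_of_ne hv⟩).elim, fun w hw => ⟨labels v, by simp, ?_⟩⟩
    rw [confSet_eq_labels (by omega) hw]
    exact labels_subset_of_orient hv hw

theorem elsoWidth_ordering (hn : 3 ≤ n) : elsoWidth (ordering n) = 3 := by
  refine elsoWidth_eq (k := 2) (i := 0) (fun v S hS => ?_) ?_ (ncard_oddPair (k := 0) (by omega))
  · unfold ordering at hS
    split_ifs at hS with hv
    · simp only [List.mem_cons, List.mem_map, List.mem_range] at hS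
      rcases hS with rfl | ⟨k, hk, rfl⟩
      · simp
      · exact ncard_preimage_val_pair_le _ _
    · rw [List.mem_singleton.1 hS]
      exact ncard_labels_le hv
  · simp only [ordering, if_true]
    exact List.mem_cons_of_mem _ (List.mem_map_of_mem (List.mem_range.2 (by omega)))

end HalfWheel

/-- For the half-wheel graph with `n` outer nodes (`n` odd), there is an extraction
order rooted at the center node together with an extraction label set ordering (for
the confluence edge label assignment) of extraction label width exactly `3`. -/
theorem stmt15 (n : ℕ) (hn : 3 ≤ n) (hodd : Odd n) :
    ∃ (A : Fin (n + 1) → Fin (n + 1) → Prop) (Ω : Fin (n + 1) → List (Set (Fin (n + 1)))),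
      (∀ v w, A v w → halfWheelAdj n v w) ∧
      (∀ v w, halfWheelAdj n v w → A v w ∨ A w v) ∧
      (∀ v w, ¬ (A v w ∧ A w v)) ∧
      Acyclic A ∧ RootedAt A 0 ∧
      IsELSO A (ConfSet A) Ω ∧ elsoWidth Ω = 3 :=
  ⟨HalfWheel.orient n, HalfWheel.ordering n, fun _ _ h => h.1,
    fun _ _ => HalfWheel.orient_or_orient_of_adj, fun _ _ h => lt_asymm h.1.2 h.2.2,
    HalfWheel.acyclic_orient, rootedAt_of_forall_ne fun _ => HalfWheel.orient_zero_of_ne,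
    HalfWheel.isELSO_ordering hn hodd, HalfWheel.elsoWidth_ordering hn⟩
end
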